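/- Let A be a discrete valuation ring with uniformizer π and fraction field K, and let 0 → V' → V → V'' → 0 be an exact sequence of finite-dimensional K-vector spaces with compatible endomorphisms F', F, F''. If F' and F'' are divisible by π on suitable lattices (F'(L') ⊆ πL' and F''(L'') ⊆ πL'' for full lattices L', L''), then there exists a full lattice L in V with F(L) ⊆ πL. Equivalently: all eigenvalue valuations (slopes) of F are ≥ v(π) if the same holds for F' and F''. -/

import Mathlib

/-!
Lift generators of `L''` to a finitely generated `M ⊆ V` with `g(M) = L''`. Compatibility of `g`
with `F` and `F''` gives `F(M) ⊆ πM + f(V')`, and as `F(M)` is finitely generated, one common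
denominator `a ≠ 0` yields `a F(M) ⊆ aπM + πf(L')`. Then `L = f(L') + aM` works: `F(f(L')) =
f(F'(L')) ⊆ πf(L')` and `F(aM) ⊆ π(aM) + πf(L')`.
-/

open scoped Pointwise nonZeroDivisors

namespace Submodule

section Scalars

variable {A K W : Type*} [CommRing A] [CommRing K] [Algebra A K]
  [AddCommGroup W] [Module A W] [Module K W] [IsScalarTower A K W]

theorem exists_smul_mem_of_mem_span_of_isLocalization {S : Submonoid A} [IsLocalization S K]
    {L : Submodule A W} {v : W}
    (hv : v ∈ span K (L : Set W)) : ∃ s ∈ S, s • v ∈ L := by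
  obtain ⟨s, hs⟩ := multiple_mem_span_of_mem_localization_span S K (L : Set W) v hv
  exact ⟨s, s.2, by rwa [span_eq] at hs⟩

theorem exists_smul_le_smul_sup_of_le_sup_span {S : Submonoid A} [IsLocalization S K]
    {N P Q : Submodule A W} (hN : N.FG)
    (hle : N ≤ P ⊔ (span K (Q : Set W)).restrictScalars A) :
    ∃ s ∈ S, s • N ≤ s • P ⊔ Q := by
  have scale : ∀ {s : A} {N : Submodule A W} (t : A), s • N ≤ s • P ⊔ Q →
      (t * s) • N ≤ (t * s) • P ⊔ Q := fun t h => by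
    rw [mul_smul, mul_smul]
    exact (smul_mono_right t h).trans
      (by rw [smul_sup']; exact sup_le_sup_left (smul_le_self_of_tower t Q) _)
  induction N, hN using fg_induction with
  | singleton x =>
    obtain ⟨p, hp, q, hq, rfl⟩ := mem_sup.1 (hle (mem_span_singleton_self x))
    obtain ⟨s, hs, hsq⟩ := exists_smul_mem_of_mem_span_of_isLocalization (S := S) hq
    refine ⟨s, hs, ?_⟩
    rw [smul_span, Set.smul_set_singleton, span_singleton_le_iff_mem, smul_add]
    exact add_mem_sup (smul_mem_pointwise_smul p s P hp) hsq
  | sup N₁ N₂ _ _ ih₁ ih₂ =>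
    obtain ⟨s₁, hs₁, h₁⟩ := ih₁ (le_sup_left.trans hle)
    obtain ⟨s₂, hs₂, h₂⟩ := ih₂ (le_sup_right.trans hle)
    refine ⟨s₂ * s₁, S.mul_mem hs₂ hs₁, ?_⟩
    rw [smul_sup']
    exact sup_le (scale s₂ h₁) (mul_comm s₁ s₂ ▸ scale s₁ h₂)

theorem span_coe_pointwise_smul_of_isUnit {c : A} (hc : IsUnit (algebraMap A K c))
    (P : Submodule A W) : span K ((c • P : Submodule A W) : Set W) = span K (P : Set W) := by
  rw [coe_pointwise_smul, ← span_smul_eq_of_isUnit (P : Set W) _ hc]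
  congr 1
  ext
  simp [Set.mem_smul_set, algebraMap_smul]

end Scalars

section Ring

variable {R M N : Type*} [CommRing R] [AddCommGroup M] [AddCommGroup N] [Module R M]
  [Module R N]

theorem map_le_smul_iff {F : M →ₗ[R] M} {r : R} {L : Submodule R M} :
    L.map F ≤ r • L ↔ ∀ x ∈ L, ∃ y ∈ L, F x = r • y := by
  rw [map_le_iff_le_comap]
  simp only [SetLike.le_def, mem_comap, mem_smul_pointwise_iff_exists, eq_comm]

theorem exists_fg_map_eq_of_surjective {g : M →ₗ[R] N} (hg : Function.Surjective g)
    {L : Submodule R N} (hL : L.FG) : ∃ P : Submodule R M, P.FG ∧ P.map g = L := by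
  obtain ⟨s, rfl⟩ := hL
  refine ⟨span R (Function.surjInv hg '' s), fg_span (s.finite_toSet.image _), ?_⟩
  rw [map_span, Set.image_image]
  simp [Function.surjInv_eq hg]

theorem map_le_smul_sup_ker {g : M →ₗ[R] N} {F : M →ₗ[R] M} {F'' : N →ₗ[R] N}
    (hcomm : g ∘ₗ F = F'' ∘ₗ g) {r : R} {P : Submodule R M}
    (hP : (P.map g).map F'' ≤ r • P.map g) : P.map F ≤ r • P ⊔ LinearMap.ker g := by
  rw [← comap_map_eq, ← map_le_iff_le_comap, map_pointwise_smul, ← map_comp, hcomm, map_comp]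
  exact hP

theorem map_sup_smul_le_smul {M' : Type*} [AddCommGroup M'] [Module R M'] {f : M' →ₗ[R] M}
    {F' : M' →ₗ[R] M'} {F : M →ₗ[R] M} (hcomm : F ∘ₗ f = f ∘ₗ F') {r c : R}
    {L' : Submodule R M'} {P : Submodule R M} (hL' : L'.map F' ≤ r • L')
    (hP : c • P.map F ≤ (c * r) • P ⊔ r • L'.map f) :
    (L'.map f ⊔ c • P).map F ≤ r • (L'.map f ⊔ c • P) := by
  rw [map_sup, smul_sup', map_pointwise_smul]
  refine sup_le ?_ (hP.trans ?_)
  · rw [← map_comp, hcomm, map_comp, ← map_pointwise_smul]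
    exact le_sup_of_le_left (map_mono hL')
  · rw [mul_comm, mul_smul, sup_comm]

end Ring

section ExactSequence

variable {A K V' V V'' : Type*} [CommRing A] [CommRing K] [Algebra A K]
  [AddCommGroup V'] [Module K V'] [Module A V'] [IsScalarTower A K V']
  [AddCommGroup V] [Module K V] [Module A V] [IsScalarTower A K V]
  [AddCommGroup V''] [Module K V''] [Module A V''] [IsScalarTower A K V'']
  {f : V' →ₗ[K] V} {g : V →ₗ[K] V''}

theorem span_coe_map_restrictScalars (L : Submodule A V') :
    span K (L.map (f.restrictScalars A) : Set V) = (span K (L : Set V')).map f := by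
  rw [map_coe, LinearMap.coe_restrictScalars, span_image]

theorem span_sup_eq_top_of_exact (hexact : LinearMap.range f = LinearMap.ker g)
    {L' : Submodule A V'} (hL' : span K (L' : Set V') = ⊤) {P : Submodule A V}
    (hP : span K (P.map (g.restrictScalars A) : Set V'') = ⊤) :
    span K ((L'.map (f.restrictScalars A) ⊔ P : Submodule A V) : Set V) = ⊤ := by
  set S := span K ((L'.map (f.restrictScalars A) ⊔ P : Submodule A V) : Set V)
  have hker : LinearMap.ker g ≤ S := by
    rw [← hexact, ← map_top, ← hL', ← span_coe_map_restrictScalars]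
    exact span_mono (SetLike.coe_subset_coe.2 le_sup_left)
  have hmap : ⊤ ≤ S.map g := by
    rw [← hP, span_coe_map_restrictScalars]
    exact map_mono (span_mono (SetLike.coe_subset_coe.2 le_sup_right))
  rw [eq_top_iff, ← sup_eq_left.2 hker, ← LinearMap.map_le_map_iff]
  exact le_top.trans hmap

end ExactSequence

end Submodule

open Submodule

theorem stmt_12_general (A : Type) [CommRing A]
    (π : A) (hπ : Irreducible π)
    (K : Type) [Field K] [Algebra A K] [IsFractionRing A K]
    (V' V V'' : Type)
    [AddCommGroup V'] [Module K V']
    [Module A V'] [IsScalarTower A K V']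
    [AddCommGroup V] [Module K V]
    [Module A V] [IsScalarTower A K V]
    [AddCommGroup V''] [Module K V'']
    [Module A V''] [IsScalarTower A K V'']
    (f : V' →ₗ[K] V) (g : V →ₗ[K] V'')
    (hg : Function.Surjective g)
    (hexact : LinearMap.range f = LinearMap.ker g)
    (F' : V' →ₗ[K] V') (F : V →ₗ[K] V) (F'' : V'' →ₗ[K] V'')
    (hcomm₁ : F ∘ₗ f = f ∘ₗ F') (hcomm₂ : g ∘ₗ F = F'' ∘ₗ g)
    (L' : Submodule A V') (hL'fg : L'.FG)
    (hL'full : Submodule.span K (L' : Set V') = ⊤)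
    (hF' : ∀ x ∈ L', ∃ y ∈ L', F' x = π • y)
    (L'' : Submodule A V'') (hL''fg : L''.FG)
    (hL''full : Submodule.span K (L'' : Set V'') = ⊤)
    (hF'' : ∀ x ∈ L'', ∃ y ∈ L'', F'' x = π • y) :
    ∃ L : Submodule A V, L.FG ∧ Submodule.span K (L : Set V) = ⊤ ∧
      ∀ x ∈ L, ∃ y ∈ L, F x = π • y := by
  have hπK : IsUnit (algebraMap A K π) :=
    ((map_ne_zero_iff _ (IsFractionRing.injective A K)).2 hπ.ne_zero).isUnit
  obtain ⟨M, hMfg, rfl⟩ := exists_fg_map_eq_of_surjective (g := g.restrictScalars A) hg hL''fg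
  set Q : Submodule A V := π • L'.map (f.restrictScalars A)
  have hker : LinearMap.ker g = span K (Q : Set V) := by
    rw [span_coe_pointwise_smul_of_isUnit hπK, span_coe_map_restrictScalars, hL'full,
      Submodule.map_top, hexact]
  have hFM :
      M.map (F.restrictScalars A) ≤ π • M ⊔ (span K (Q : Set V)).restrictScalars A := by
    rw [← hker, ← LinearMap.ker_restrictScalars A]
    exact map_le_smul_sup_ker (congrArg (LinearMap.restrictScalars A) hcomm₂)
      ((map_le_smul_iff (F := F''.restrictScalars A)).2 hF'')
  obtain ⟨a, ha, haFM⟩ := exists_smul_le_smul_sup_of_le_sup_span (S := A⁰) (hMfg.map _) hFM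
  have haK : IsUnit (algebraMap A K a) := IsLocalization.map_units K ⟨a, ha⟩
  refine ⟨L'.map (f.restrictScalars A) ⊔ a • M, (hL'fg.map _).sup (hMfg.map _),
    span_sup_eq_top_of_exact hexact hL'full ?_, (map_le_smul_iff (F := F.restrictScalars A)).1 ?_⟩
  · rw [map_pointwise_smul, span_coe_pointwise_smul_of_isUnit haK, hL''full]
  · refine map_sup_smul_le_smul (congrArg (LinearMap.restrictScalars A) hcomm₁)
      ((map_le_smul_iff (F := F'.restrictScalars A)).2 hF') ?_
    rwa [mul_smul]

/-- In a short exact sequence of finite-dimensional `K`-vector spaces with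
compatible endomorphisms, if the outer endomorphisms are divisible by a
uniformizer `π` on full lattices, then so is the middle one on a suitable full
lattice (slopes `≥ v(π)` on the ends imply the same in the middle). -/
theorem stmt_12 (A : Type) [CommRing A] [IsDomain A] [IsDiscreteValuationRing A]
    (π : A) (hπ : Irreducible π)
    (K : Type) [Field K] [Algebra A K] [IsFractionRing A K]
    (V' V V'' : Type)
    [AddCommGroup V'] [Module K V'] [FiniteDimensional K V']
    [Module A V'] [IsScalarTower A K V']
    [AddCommGroup V] [Module K V] [FiniteDimensional K V]
    [Module A V] [IsScalarTower A K V]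
    [AddCommGroup V''] [Module K V''] [FiniteDimensional K V'']
    [Module A V''] [IsScalarTower A K V'']
    (f : V' →ₗ[K] V) (g : V →ₗ[K] V'')
    (hf : Function.Injective f) (hg : Function.Surjective g)
    (hexact : LinearMap.range f = LinearMap.ker g)
    (F' : V' →ₗ[K] V') (F : V →ₗ[K] V) (F'' : V'' →ₗ[K] V'')
    (hcomm₁ : F ∘ₗ f = f ∘ₗ F') (hcomm₂ : g ∘ₗ F = F'' ∘ₗ g)
    (L' : Submodule A V') (hL'fg : L'.FG)
    (hL'full : Submodule.span K (L' : Set V') = ⊤)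
    (hF' : ∀ x ∈ L', ∃ y ∈ L', F' x = π • y)
    (L'' : Submodule A V'') (hL''fg : L''.FG)
    (hL''full : Submodule.span K (L'' : Set V'') = ⊤)
    (hF'' : ∀ x ∈ L'', ∃ y ∈ L'', F'' x = π • y) :
    ∃ L : Submodule A V, L.FG ∧ Submodule.span K (L : Set V) = ⊤ ∧
      ∀ x ∈ L, ∃ y ∈ L, F x = π • y :=
  stmt_12_general A π hπ K V' V V'' f g hg hexact F' F F'' hcomm₁ hcomm₂ L' hL'fg hL'full hF' L''
    hL''fg hL''full hF''
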